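/- Monotonicity with respect to enforced activation: fix an array of instructions τ, a configuration η, and a set V ⊂ ℤ^d. If α is a τ-acceptable sequence of topplings that stabilizes η in V, and β ⊂ V is a τ-legal sequence of topplings for η, then m_α ≥ m_β. Consequently, if α is a τ-acceptable sequence of topplings that stabilizes η in V, then m_α ≥ m^τ_{V,η}. -/
import Mathlib


open MeasureTheory

noncomputable section

/-! ## Site-wise (Diaconis–Fulton) representation of Activated Random Walk -/

/-- An instruction: either a sleep instruction or a jump instruction to a site. -/
inductive Instr (Λ : Type*) where
  | sleep : Instr Λ
  | jump : Λ → Instr Λ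

instance {Λ : Type*} : MeasurableSpace (Instr Λ) := ⊤

/-- The state of a site: either one sleeping particle (`𝔰`), or `k` active particles. -/
inductive SiteState where
  | sleeping : SiteState
  | act : ℕ → SiteState

/-- Total number of particles on a site. -/
def SiteState.particles : SiteState → ℕ
  | sleeping => 1
  | act k => k

/-- Number of active particles on a site. -/
def SiteState.activeCount : SiteState → ℕ
  | sleeping => 0
  | act k => k

/-- Remove one particle from a site (waking the site first if it was sleeping). -/
def SiteState.remove : SiteState → SiteState
  | sleeping => act 0
  | act k => act (k - 1)

/-- Add one active particle to a site, waking any sleeping particle there. -/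
def SiteState.add (s : SiteState) : SiteState := act (s.particles + 1)

/-- A configuration `η : Λ → ℕ ∪ {𝔰}` of the activated random walk. -/
abbrev Config (Λ : Type*) := Λ → SiteState

variable {Λ : Type*} [DecidableEq Λ]

/-- The effect of the instruction `ι` applied at the site `x`: a sleep instruction puts the
particle at `x` to sleep if it is alone (otherwise nothing happens); a jump instruction to `y`
moves one particle from `x` to `y`, waking any sleeping particle at `y`.  (For an acceptable
but not legal toppling, the sleeping particle at `x` is first woken up.) -/
def applyInstr (ι : Instr Λ) (x : Λ) (η : Config Λ) : Config Λ :=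
  match ι with
  | .sleep => Function.update η x (if (η x).particles = 1 then .sleeping else η x)
  | .jump y =>
      let η₁ := Function.update η x (η x).remove
      Function.update η₁ y (η₁ y).add

/-- A state of the site-wise representation: a configuration together with the odometer
counting the number of instructions already used at each site. -/
abbrev SWState (Λ : Type*) := Config Λ × (Λ → ℕ)

/-- Toppling the site `x`: apply the next unused instruction at `x` (instructions being
numbered from `0`) and increment the odometer at `x`.  This is the operator `Φ^τ_x`. -/
def topple (τ : Λ → ℕ → Instr Λ) (x : Λ) (s : SWState Λ) : SWState Λ :=
  (applyInstr (τ x (s.2 x)) x s.1, Function.update s.2 x (s.2 x + 1))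

/-- `Φ^τ_α` for a toppling sequence `α`. -/
def toppleSeq (τ : Λ → ℕ → Instr Λ) (α : List Λ) (s : SWState Λ) : SWState Λ :=
  α.foldl (fun s x => topple τ x s) s

/-- A toppling at `x` is legal if `x` holds at least one active particle. -/
def IsLegal (s : SWState Λ) (x : Λ) : Prop := 0 < (s.1 x).activeCount

/-- A toppling at `x` is acceptable if `x` holds at least one particle. -/
def IsAcceptable (s : SWState Λ) (x : Λ) : Prop := 0 < (s.1 x).particles

/-- A `τ`-legal sequence of topplings starting from the state `s`. -/
def LegalSeq (τ : Λ → ℕ → Instr Λ) : List Λ → SWState Λ → Prop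
  | [], _ => True
  | x :: rest, s => IsLegal s x ∧ LegalSeq τ rest (topple τ x s)

/-- A `τ`-acceptable sequence of topplings starting from the state `s`. -/
def AcceptableSeq (τ : Λ → ℕ → Instr Λ) : List Λ → SWState Λ → Prop
  | [], _ => True
  | x :: rest, s => IsAcceptable s x ∧ AcceptableSeq τ rest (topple τ x s)

/-- The initial state associated with a configuration: zero odometer. -/
def init (η : Config Λ) : SWState Λ := (η, fun _ => 0)

/-- `α` stabilizes `η` in `V`: after applying `α`, no site of `V` holds an active particle. -/
def StabilizesIn (τ : Λ → ℕ → Instr Λ) (α : List Λ) (η : Config Λ) (V : Set Λ) : Prop :=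
  ∀ x ∈ V, ((toppleSeq τ α (init η)).1 x).activeCount = 0

/-- The odometer `m_α` of a toppling sequence `α`: the number of occurrences of each site. -/
def seqOdometer (α : List Λ) (x : Λ) : ℕ := α.count x

/-- `m^τ_{V,η}`: the supremum of `m_α` over `τ`-legal toppling sequences `α` contained in `V`,
started from `η` with zero odometer. -/
def mV (τ : Λ → ℕ → Instr Λ) (V : Set Λ) (η : Config Λ) (x : Λ) : ℕ∞ :=
  ⨆ α : {α : List Λ // (∀ y ∈ α, y ∈ V) ∧ LegalSeq τ α (init η)}, (seqOdometer α.1 x : ℕ∞)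

/-- The total stabilization odometer `m^τ_η`. -/
def mTot (τ : Λ → ℕ → Instr Λ) (η : Config Λ) (x : Λ) : ℕ∞ :=
  ⨆ α : {α : List Λ // LegalSeq τ α (init η)}, (seqOdometer α.1 x : ℕ∞)

end
section Aux

variable {Λ : Type*} [DecidableEq Λ]

lemma sleep_apply (x : Λ) (η : Config Λ) (w : Λ) :
    applyInstr .sleep x η w
      = if w = x then (if (η x).particles = 1 then .sleeping else η x) else η w := by
  show Function.update η x _ w = _
  simp [Function.update_apply]

lemma jump_apply (x y : Λ) (η : Config Λ) (w : Λ) :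
    applyInstr (.jump y) x η w
      = if w = y then (if y = x then (η x).remove else η y).add
        else if w = x then (η x).remove else η w := by
  show Function.update (Function.update η x (η x).remove) y _ w = _
  simp [Function.update_apply]

lemma applyInstr_comm (ι₁ ι₂ : Instr Λ) {x z : Λ} (hxz : x ≠ z) {η : Config Λ}
    (hx : 0 < (η x).activeCount) (hz : 0 < (η z).particles) :
    applyInstr ι₁ x (applyInstr ι₂ z η) = applyInstr ι₂ z (applyInstr ι₁ x η) := by
  have hxz' : z ≠ x := hxz.symm
  funext w
  cases ι₁ with
  | sleep => cases ι₂ with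
    | sleep =>
      simp only [sleep_apply, hxz, hxz', if_false]
      by_cases h1 : w = x <;> by_cases h2 : w = z <;> simp_all
    | jump v =>
      simp only [sleep_apply, jump_apply, hxz, hxz', if_false]
      by_cases h1 : w = x <;> by_cases h2 : w = z <;> by_cases h3 : w = v <;>
        simp_all <;>
        cases hηx : η x <;> cases hηz : η z <;>
        simp_all [SiteState.add, SiteState.remove, SiteState.particles, SiteState.activeCount] <;>
        (first | omega | (split_ifs <;> simp_all <;> omega))
  | jump u => cases ι₂ with
    | sleep =>
      simp only [sleep_apply, jump_apply, hxz, hxz', if_false]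
      by_cases h1 : w = x <;> by_cases h2 : w = z <;> by_cases h3 : w = u <;>
        simp_all <;>
        cases hηx : η x <;> cases hηz : η z <;>
        simp_all [SiteState.add, SiteState.remove, SiteState.particles, SiteState.activeCount] <;>
        (first | omega | (split_ifs <;> simp_all <;> omega))
    | jump v =>
      simp only [jump_apply, hxz, hxz', if_false]
      by_cases h1 : w = x <;> by_cases h2 : w = z <;> by_cases h3 : w = u <;>
        by_cases h4 : w = v <;>
        simp_all <;>
        cases hηx : η x <;> cases hηz : η z <;>
        simp_all [SiteState.add, SiteState.remove, SiteState.particles, SiteState.activeCount] <;>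
        (first | omega | (split_ifs <;> simp_all <;> omega))


lemma SiteState.particles_pos_of_active {s : SiteState} (h : 0 < s.activeCount) :
    0 < s.particles := by
  cases s <;> simp_all [SiteState.activeCount, SiteState.particles]

lemma IsLegal.acceptable {s : SWState Λ} {x : Λ} (h : IsLegal s x) : IsAcceptable s x :=
  SiteState.particles_pos_of_active h

/-- Toppling a site `z ≠ x` leaves the state at `x` unchanged or adds a particle. -/
lemma topple_state_ne (τ : Λ → ℕ → Instr Λ) {z x : Λ} (hxz : x ≠ z) (s : SWState Λ) :
    (topple τ z s).1 x = s.1 x ∨ (topple τ z s).1 x = (s.1 x).add := by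
  have ht : (topple τ z s).1 = applyInstr (τ z (s.2 z)) z s.1 := rfl
  rw [ht]
  cases τ z (s.2 z) with
  | sleep => left; simp [sleep_apply, hxz]
  | jump w =>
    by_cases hw : x = w
    · subst hw; right
      rw [jump_apply, if_pos rfl, if_neg hxz]
    · left; simp [jump_apply, hxz, hw]

lemma IsLegal.topple_ne {τ : Λ → ℕ → Instr Λ} {z x : Λ} (hxz : x ≠ z) {s : SWState Λ}
    (h : IsLegal s x) : IsLegal (topple τ z s) x := by
  rcases topple_state_ne τ hxz s with he | he <;> unfold IsLegal at * <;> rw [he]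
  · exact h
  · simp [SiteState.add, SiteState.activeCount]

lemma IsAcceptable.topple_ne {τ : Λ → ℕ → Instr Λ} {z x : Λ} (hxz : x ≠ z) {s : SWState Λ}
    (h : IsAcceptable s x) : IsAcceptable (topple τ z s) x := by
  rcases topple_state_ne τ hxz s with he | he <;> unfold IsAcceptable at * <;> rw [he]
  · exact h
  · simp [SiteState.add, SiteState.particles]

lemma IsLegal.toppleSeq_not_mem {τ : Λ → ℕ → Instr Λ} {x : Λ} {α : List Λ} {s : SWState Λ}
    (h : IsLegal s x) (hx : x ∉ α) : IsLegal (toppleSeq τ α s) x := by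
  induction α generalizing s with
  | nil => exact h
  | cons z t ih =>
    have hxz : x ≠ z := fun he => hx (by simp [he])
    exact ih (h.topple_ne hxz) (fun hm => hx (by simp [hm]))
lemma topple_comm (τ : Λ → ℕ → Instr Λ) {x z : Λ} (hxz : x ≠ z) {s : SWState Λ}
    (hx : IsLegal s x) (hz : IsAcceptable s z) :
    topple τ x (topple τ z s) = topple τ z (topple τ x s) := by
  obtain ⟨η, h⟩ := s
  have hxz' : z ≠ x := hxz.symm
  unfold topple
  simp only [Function.update_of_ne hxz, Function.update_of_ne hxz']
  refine Prod.ext ?_ ?_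
  · exact applyInstr_comm _ _ hxz hx hz
  · exact Function.update_comm hxz' _ _ _

lemma toppleSeq_cons (τ : Λ → ℕ → Instr Λ) (x : Λ) (l : List Λ) (s : SWState Λ) :
    toppleSeq τ (x :: l) s = toppleSeq τ l (topple τ x s) := rfl

lemma toppleSeq_append (τ : Λ → ℕ → Instr Λ) (a b : List Λ) (s : SWState Λ) :
    toppleSeq τ (a ++ b) s = toppleSeq τ b (toppleSeq τ a s) := List.foldl_append ..

/-- Move-to-front: if `x ∉ a` is legal at `s` and `a ++ x :: b` is acceptable from `s`,
then `x :: a ++ b` is acceptable from `s` and produces the same state. -/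
lemma move_to_front (τ : Λ → ℕ → Instr Λ) {x : Λ} {a : List Λ} (b : List Λ) {s : SWState Λ}
    (hxa : x ∉ a) (hx : IsLegal s x) (hacc : AcceptableSeq τ (a ++ x :: b) s) :
    toppleSeq τ (x :: (a ++ b)) s = toppleSeq τ (a ++ x :: b) s ∧
      AcceptableSeq τ (x :: (a ++ b)) s := by
  induction a generalizing s with
  | nil =>
    exact ⟨rfl, hacc⟩
  | cons z t ih =>
    have hxz : x ≠ z := fun he => hxa (by simp [he])
    have hxt : x ∉ t := fun hm => hxa (by simp [hm])
    obtain ⟨hzacc, hrest⟩ := hacc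
    have hxlz : IsLegal (topple τ z s) x := hx.topple_ne hxz
    obtain ⟨heq, hac⟩ := ih hxt hxlz hrest
    have hcomm : topple τ z (topple τ x s) = topple τ x (topple τ z s) :=
      (topple_comm τ hxz hx hzacc).symm
    constructor
    · show toppleSeq τ (t ++ b) (topple τ z (topple τ x s))
        = toppleSeq τ (t ++ x :: b) (topple τ z s)
      rw [hcomm, ← toppleSeq_cons, heq]
    · obtain ⟨hxacc, hacrest⟩ := hac
      refine ⟨?_, ?_, ?_⟩
      · exact hx.acceptable
      · exact hzacc.topple_ne hxz.symm
      · show AcceptableSeq τ (t ++ b) (topple τ z (topple τ x s))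
        rw [hcomm]
        exact hacrest
lemma exists_split {x : Λ} {l : List Λ} (h : x ∈ l) :
    ∃ a b, l = a ++ x :: b ∧ x ∉ a := by
  induction l with
  | nil => simp at h
  | cons y t ih =>
    by_cases hy : x = y
    · exact ⟨[], t, by simp [hy], by simp⟩
    · obtain ⟨a, b, rfl, ha⟩ := ih (by simpa [hy] using h)
      exact ⟨y :: a, b, rfl, by simp [hy, ha]⟩

/-- The key induction: a legal sequence in `V` is dominated by any acceptable sequence
stabilizing `V`. -/
lemma key_lemma (τ : Λ → ℕ → Instr Λ) (V : Set Λ) (β : List Λ) :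
    ∀ (s : SWState Λ) (α : List Λ), AcceptableSeq τ α s →
      (∀ y ∈ V, ((toppleSeq τ α s).1 y).activeCount = 0) →
      (∀ y ∈ β, y ∈ V) → LegalSeq τ β s →
      ∀ x, β.count x ≤ α.count x := by
  induction β with
  | nil => intro s α _ _ _ _ x; simp
  | cons z β' ih =>
    intro s α hacc hstab hβV hleg x
    obtain ⟨hzleg, hβ'leg⟩ := hleg
    have hzV : z ∈ V := hβV z (by simp)
    -- z must occur in α
    have hzα : z ∈ α := by
      by_contra hz
      have hl : IsLegal (toppleSeq τ α s) z := hzleg.toppleSeq_not_mem hz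
      have h0 := hstab z hzV
      unfold IsLegal at hl
      omega
    obtain ⟨a, b, rfl, hza⟩ := exists_split hzα
    obtain ⟨heq, hacc'⟩ := move_to_front τ b hza hzleg hacc
    obtain ⟨-, haccrest⟩ := hacc'
    have heq' : toppleSeq τ (a ++ b) (topple τ z s) = toppleSeq τ (a ++ z :: b) s := heq
    have hstab' : ∀ y ∈ V, ((toppleSeq τ (a ++ b) (topple τ z s)).1 y).activeCount = 0 := by
      intro y hy; rw [heq']; exact hstab y hy
    have hcount := ih (topple τ z s) (a ++ b) haccrest hstab'
      (fun y hy => hβV y (by simp [hy])) hβ'leg x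
    have hc1 : (z :: β').count x = β'.count x + if z = x then 1 else 0 := by
      simp [List.count_cons]
    have hc2 : (a ++ z :: b).count x = (a ++ b).count x + if z = x then 1 else 0 := by
      simp [List.count_append, List.count_cons, Nat.add_assoc]
    omega
end Aux


noncomputable section

/-- The lattice `ℤ^d`. -/
abbrev Zd (d : ℕ) := Fin d → ℤ

/-- **Monotonicity with respect to enforced activation** (Lemma 2.1 in Rolla's survey).
If `α` is a `τ`-acceptable sequence of topplings that stabilizes `η` in `V`, and `β ⊆ V` is a
`τ`-legal sequence of topplings for `η`, then `m_α ≥ m_β`.  Consequently, if `α` is a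
`τ`-acceptable sequence of topplings that stabilizes `η` in `V`, then `m_α ≥ m^τ_{V,η}`. -/
theorem statement14 {d : ℕ} (τ : Zd d → ℕ → Instr (Zd d)) (η : Config (Zd d))
    (V : Set (Zd d)) (α : List (Zd d))
    (hα : AcceptableSeq τ α (init η)) (hαstab : StabilizesIn τ α η V) :
    (∀ β : List (Zd d), (∀ x ∈ β, x ∈ V) → LegalSeq τ β (init η) →
      ∀ x, seqOdometer β x ≤ seqOdometer α x) ∧
    (∀ x, mV τ V η x ≤ (seqOdometer α x : ℕ∞)) := by
  constructor
  · intro β hβV hβleg x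
    exact key_lemma τ V β (init η) α hα hαstab hβV hβleg x
  · intro x
    rw [mV]
    refine iSup_le fun ⟨β, hβV, hβleg⟩ => ?_
    exact_mod_cast key_lemma τ V β (init η) α hα hαstab hβV hβleg x

end
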